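/- arXiv:1905.04013 — 3 statements merged into one kernel-verified Lean document; each statement's English description precedes it below -/
import Mathlib

section
/- On an almost nearly cosymplectic manifold, the covariant derivative of h̄ satisfies ḡ((∇̄_X h̄)Y, Z) = -η̄(Y)ḡ(h̄²X, Z) + η̄(Z)ḡ(h̄²X, Y), and this equals -R̄(ξ̄, X, Y, Z) where R̄ is the Riemannian curvature of ḡ. -/
/-!
Because `h` is `g`-skew and `η ∘ h = 0`, the deformation terms of `∇̄ = ∇ + c η(·) h + c' η h(·)`
change `g((∇_X h)Y, Z)` only by `-c η(Y) g(h²X, Z)` and do not change `η((∇_X h)Y)`, which the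
nearly cosymplectic identity gives as `g(h²X, Y)`. With `c = 1/2` and `ḡ = (3/2) g + (3/4) η ⊗ η`
this yields the formula for `ḡ((∇̄_X h̄)Y, Z)`, and the Killing identity turns it into the
curvature formula.
-/

namespace NearlyCosymplectic

variable {V : Type*} [AddCommGroup V] [Module ℝ V]
  {g : V →ₗ[ℝ] V →ₗ[ℝ] ℝ} {η : V →ₗ[ℝ] ℝ} (h : V → V)

def covDeriv (D : V → V → V) (X Y : V) : V := D X (h Y) - h (D X Y)

variable {h}

theorem eta_covDeriv_deformed {nabla nb : V → V → V} {c c' : ℝ}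
    (hηh : ∀ X, η (h X) = 0)
    (hnb : ∀ X Y, nb X Y = nabla X Y + (c * η Y) • h X + (c' * η X) • h Y) (X Y : V) :
    η (covDeriv h nb X Y) = η (covDeriv h nabla X Y) := by
  simp only [covDeriv, map_sub, hηh, hnb, map_add, map_smul, smul_eq_mul]
  ring

theorem apply_covDeriv_deformed {nabla nb : V → V → V} {c c' : ℝ}
    (hhskew : ∀ X Y, g (h X) Y = - g X (h Y)) (hηh : ∀ X, η (h X) = 0)
    (hnb : ∀ X Y, nb X Y = nabla X Y + (c * η Y) • h X + (c' * η X) • h Y) (X Y Z : V) :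
    g (covDeriv h nb X Y) Z = g (covDeriv h nabla X Y) Z - c * η Y * g (h (h X)) Z := by
  have hh_hh : ∀ W, g (h W) (h Z) = - g (h (h W)) Z := fun W => by
    rw [hhskew (h W) Z, neg_neg]
  simp only [covDeriv, map_sub, LinearMap.sub_apply]
  rw [hhskew (nb X Y) Z, hhskew (nabla X Y) Z, hnb, hnb]
  simp only [map_add, map_smul, LinearMap.add_apply, LinearMap.smul_apply, smul_eq_mul, hηh,
    hh_hh]
  ring

section NearlyCosymplecticIdentity

variable {nabla : V → V → V} {ξ : V}
  (hnc : ∀ X Y, covDeriv h nabla X Y = g (h (h X)) Y • ξ - η Y • h (h X))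
include hnc

theorem eta_covDeriv (hηξ : η ξ = 1) (hηh : ∀ X, η (h X) = 0) (X Y : V) :
    η (covDeriv h nabla X Y) = g (h (h X)) Y := by
  simp [hnc, hηξ, hηh]

theorem apply_covDeriv (hgξ : ∀ Z, g ξ Z = η Z) (X Y Z : V) :
    g (covDeriv h nabla X Y) Z = g (h (h X)) Y * η Z - η Y * g (h (h X)) Z := by
  simp [hnc, hgξ]

end NearlyCosymplecticIdentity

end NearlyCosymplectic

open NearlyCosymplectic in
theorem stmt_9_general {V : Type*} [AddCommGroup V] [Module ℝ V]
    (g : V →ₗ[ℝ] V →ₗ[ℝ] ℝ) (η : V →ₗ[ℝ] ℝ) (ξ : V)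
    (nabla nb : V → V → V) (h : V → V)
    (gb : V → V → ℝ) (ηb : V → ℝ) (ξb : V)
    (Rb : V → V → V → V → ℝ)
    (hηξ : η ξ = 1)
    (hη : ∀ X, η X = g X ξ)
    (hgsymm : ∀ X Y, g X Y = g Y X)
    (hhskew : ∀ X Y, g (h X) Y = - g X (h Y))
    (hηh : ∀ X, η (h X) = 0)
    (hnc16 : ∀ X Y, nabla X (h Y) - h (nabla X Y) =
      (g (h (h X)) Y) • ξ - (η Y) • h (h X))
    (hgb : ∀ X Y, gb X Y = (3/2) * g X Y + (3/4) * (η X * η Y))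
    (hηb : ∀ X, ηb X = (3/2) * η X)
    (hnb : ∀ X Y, nb X Y = nabla X Y + ((1/2) * η Y) • h X + ((1/2) * η X) • h Y)
    (hKillR : ∀ X Y Z, gb (nb X (h Y) - h (nb X Y)) Z = - Rb ξb X Y Z) :
    (∀ X Y Z, gb (nb X (h Y) - h (nb X Y)) Z =
      - ηb Y * gb (h (h X)) Z + ηb Z * gb (h (h X)) Y) ∧
    (∀ X Y Z, - Rb ξb X Y Z =
      - ηb Y * gb (h (h X)) Z + ηb Z * gb (h (h X)) Y) := by
  have hgξ : ∀ Z, g ξ Z = η Z := fun Z => by rw [hη, hgsymm]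
  have hcovDeriv_bar : ∀ X Y Z, gb (covDeriv h nb X Y) Z =
      - ηb Y * gb (h (h X)) Z + ηb Z * gb (h (h X)) Y := by
    intro X Y Z
    rw [hgb, hgb, hgb, hηb, hηb, apply_covDeriv_deformed hhskew hηh hnb,
      apply_covDeriv hnc16 hgξ, eta_covDeriv_deformed hηh hnb, eta_covDeriv hnc16 hηξ hηh,
      hηh (h X)]
    ring
  exact ⟨hcovDeriv_bar, fun X Y Z => (hKillR X Y Z).symm.trans (hcovDeriv_bar X Y Z)⟩

/-- On an almost nearly cosymplectic manifold,
`ḡ((∇̄_X h̄)Y, Z) = -η̄(Y)ḡ(h̄²X, Z) + η̄(Z)ḡ(h̄²X, Y)`, and this equals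
`-R̄(ξ̄, X, Y, Z)` (the Riemannian curvature of `ḡ`), `ξ̄` being Killing.
Here `h̄ = h`, `hX = ∇_X ξ`, the nearly cosymplectic identity
`(∇_X h)Y = g(h²X,Y)ξ - η(Y)h²X` holds, and
`∇̄_X Y = ∇_X Y + (1/2)η(Y)hX + (1/2)η(X)hY` (D-homothety `a = 3/2`). -/
theorem stmt_9 {V : Type*} [AddCommGroup V] [Module ℝ V]
    (g : V →ₗ[ℝ] V →ₗ[ℝ] ℝ) (η : V →ₗ[ℝ] ℝ) (ξ : V)
    (nabla nb : V → V → V) (dη : V → V → ℝ) (h : V → V)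
    (gb : V → V → ℝ) (ηb : V → ℝ) (ξb : V)
    (Rb : V → V → V → V → ℝ)
    (hηξ : η ξ = 1)
    (hη : ∀ X, η X = g X ξ)
    (hgsymm : ∀ X Y, g X Y = g Y X)
    (hh : ∀ X, h X = nabla X ξ)
    (hhg : ∀ X Y, g (h X) Y = (1/2) * dη X Y)
    (hhskew : ∀ X Y, g (h X) Y = - g X (h Y))
    (hηh : ∀ X, η (h X) = 0)
    (hhξ : h ξ = 0)
    (hnc16 : ∀ X Y, nabla X (h Y) - h (nabla X Y) =
      (g (h (h X)) Y) • ξ - (η Y) • h (h X))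
    (hgb : ∀ X Y, gb X Y = (3/2) * g X Y + (3/4) * (η X * η Y))
    (hηb : ∀ X, ηb X = (3/2) * η X)
    (hξb : ξb = (2/3 : ℝ) • ξ)
    (hnb : ∀ X Y, nb X Y = nabla X Y + ((1/2) * η Y) • h X + ((1/2) * η X) • h Y)
    (hKillR : ∀ X Y Z, gb (nb X (h Y) - h (nb X Y)) Z = - Rb ξb X Y Z) :
    (∀ X Y Z, gb (nb X (h Y) - h (nb X Y)) Z =
      - ηb Y * gb (h (h X)) Z + ηb Z * gb (h (h X)) Y) ∧
    (∀ X Y Z, - Rb ξb X Y Z =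
      - ηb Y * gb (h (h X)) Z + ηb Z * gb (h (h X)) Y) :=
  stmt_9_general g η ξ nabla nb h gb ηb ξb Rb hηξ hη hgsymm hhskew hηh hnc16 hgb hηb hnb hKillR
end

section
/- A 5-dimensional almost nearly cosymplectic non-cosymplectic manifold is η-Einstein: its Ricci tensor satisfies R̄ic(X,Y) = 2λ² ḡ(X,Y) + 2λ² η̄(X)η̄(Y), and in particular its scalar curvature equals 12λ². -/
/-!
Substituting `h² = -λ²(I - η ⊗ ξ)`, `Ric = 4λ²g` and `tr h² = -4λ²` into the D-homothety formula
gives `R̄ic = 3λ² g + 6λ² η ⊗ η`, which is `2λ² ḡ + 2λ² η̄ ⊗ η̄` since `ḡ = (3/2) g + (3/4) η ⊗ η`.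
Tracing against a `ḡ`-orthonormal basis, `tr ḡ = 5`, while `η̄ = ḡ(·, ξ̄)` with `ḡ(ξ̄, ξ̄) = 1`, so
`η̄ ⊗ η̄` has trace `1`; hence the scalar curvature is `2λ² · 5 + 2λ² · 1 = 12λ²`.
-/

open Module

section OrthonormalBasis

variable {R M ι : Type*} [CommSemiring R] [AddCommMonoid M] [Module R M] [Fintype ι]
  [DecidableEq ι] (B : M →ₗ[R] M →ₗ[R] R) (b : Basis ι R M)

lemma LinearMap.apply_basis_eq_repr_of_orthonormal
    (hb : ∀ i j, B (b i) (b j) = if i = j then 1 else 0) (v : M) (i : ι) :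
    B (b i) v = b.repr v i := by
  calc B (b i) v = B (b i) (∑ j, b.repr v j • b j) := by rw [b.sum_repr]
    _ = b.repr v i := by
      simp only [map_sum, map_smul, hb, smul_eq_mul, mul_ite, mul_one, mul_zero,
        Finset.sum_ite_eq, Finset.mem_univ, if_true]

lemma LinearMap.sum_apply_basis_mul_self_of_orthonormal
    (hb : ∀ i j, B (b i) (b j) = if i = j then 1 else 0) (v : M) :
    ∑ i, B (b i) v * B (b i) v = B v v := by
  calc ∑ i, B (b i) v * B (b i) v = ∑ i, b.repr v i * B (b i) v := by
        simp only [B.apply_basis_eq_repr_of_orthonormal b hb]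
    _ = B (∑ i, b.repr v i • b i) v := by
        simp only [map_sum, map_smul, LinearMap.sum_apply, LinearMap.smul_apply,
          smul_eq_mul]
    _ = B v v := by rw [b.sum_repr]

end OrthonormalBasis

section DHomothety

variable {V : Type*} [AddCommGroup V] [Module ℝ V]

def dHomotheticMetric (a : ℝ) (g : V →ₗ[ℝ] V →ₗ[ℝ] ℝ) (η : V →ₗ[ℝ] ℝ) :
    V →ₗ[ℝ] V →ₗ[ℝ] ℝ :=
  a • g + (a * (a - 1)) • (LinearMap.mul ℝ ℝ).compl₁₂ η η

lemma dHomotheticMetric_apply (a : ℝ) (g : V →ₗ[ℝ] V →ₗ[ℝ] ℝ) (η : V →ₗ[ℝ] ℝ) (X Y : V) :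
    dHomotheticMetric a g η X Y = a * g X Y + a * (a - 1) * (η X * η Y) := by
  simp [dHomotheticMetric, mul_assoc]

lemma dHomotheticMetric_apply_inv_smul_reeb {a : ℝ} (ha : a ≠ 0) {g : V →ₗ[ℝ] V →ₗ[ℝ] ℝ}
    {η : V →ₗ[ℝ] ℝ} {ξ : V} (hηξ : η ξ = 1) (hη : ∀ X, η X = g X ξ) (X : V) :
    dHomotheticMetric a g η X (a⁻¹ • ξ) = a * η X := by
  rw [dHomotheticMetric_apply, map_smul, map_smul, smul_eq_mul, smul_eq_mul, ← hη, hηξ]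
  field_simp
  ring

lemma apply_comp_self_left_of_sq_eq {g : V →ₗ[ℝ] V →ₗ[ℝ] ℝ} {η : V →ₗ[ℝ] ℝ} {ξ : V}
    {h : V →ₗ[ℝ] V} {lam : ℝ} (hh2 : ∀ X, h (h X) = -(lam ^ 2) • X + (lam ^ 2 * η X) • ξ)
    (hgξ : ∀ Y, g ξ Y = η Y) (X Y : V) :
    g (h (h X)) Y = -(lam ^ 2) * g X Y + lam ^ 2 * (η X * η Y) := by
  simp [hh2, hgξ, mul_assoc]

end DHomothety

theorem stmt_12_general {V : Type*} [AddCommGroup V] [Module ℝ V]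
    (g : V →ₗ[ℝ] V →ₗ[ℝ] ℝ) (η : V →ₗ[ℝ] ℝ) (ξ : V)
    (h : V →ₗ[ℝ] V) (lam : ℝ)
    (Ric Ricb : V → V → ℝ) (trh2 : ℝ)
    (gb : V → V → ℝ) (ηb : V → ℝ)
    (b : Module.Basis (Fin 5) ℝ V)
    (hηξ : η ξ = 1)
    (hη : ∀ X, η X = g X ξ)
    (hgsymm : ∀ X Y, g X Y = g Y X)
    (hh2 : ∀ X, h (h X) = -(lam ^ 2) • X + (lam ^ 2 * η X) • ξ)
    (htrh2 : trh2 = -(4 * lam ^ 2))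
    (hEinstein : ∀ X Y, Ric X Y = 4 * lam ^ 2 * g X Y)
    (hgb : ∀ X Y, gb X Y = (3/2) * g X Y + (3/4) * (η X * η Y))
    (hηb : ∀ X, ηb X = (3/2) * η X)
    (hRicrel : ∀ X Y, Ricb X Y = Ric X Y + g (h (h X)) Y
        - (5/4) * trh2 * (η X * η Y))
    (horth : ∀ i j, gb (b i) (b j) = if i = j then 1 else 0) :
    (∀ X Y, Ricb X Y = 2 * lam ^ 2 * gb X Y + 2 * lam ^ 2 * (ηb X * ηb Y)) ∧
    (∑ i, Ricb (b i) (b i) = 12 * lam ^ 2) := by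
  have hgξ : ∀ Y, g ξ Y = η Y := fun Y => by rw [hgsymm, hη]
  have hEtaEinstein : ∀ X Y, Ricb X Y = 2 * lam ^ 2 * gb X Y + 2 * lam ^ 2 * (ηb X * ηb Y) := by
    intro X Y
    rw [hRicrel, hEinstein, apply_comp_self_left_of_sq_eq hh2 hgξ, htrh2, hgb, hηb, hηb]
    ring
  have hgb_eq : ∀ X Y, gb X Y = dHomotheticMetric (3/2) g η X Y := by
    intro X Y
    rw [hgb, dHomotheticMetric_apply]
    norm_num
  have hηb_eq : ∀ X, ηb X = dHomotheticMetric (3/2) g η X ((3/2 : ℝ)⁻¹ • ξ) := by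
    intro X
    rw [hηb, dHomotheticMetric_apply_inv_smul_reeb (by norm_num) hηξ hη]
  have horth' : ∀ i j, dHomotheticMetric (3/2) g η (b i) (b j) = if i = j then 1 else 0 := by
    simpa only [hgb_eq] using horth
  have hηb_trace : ∑ i, ηb (b i) * ηb (b i) = 1 := by
    simp only [hηb_eq]
    rw [LinearMap.sum_apply_basis_mul_self_of_orthonormal _ b horth',
      dHomotheticMetric_apply_inv_smul_reeb (by norm_num) hηξ hη, map_smul, hηξ]
    norm_num
  refine ⟨hEtaEinstein, ?_⟩
  calc ∑ i, Ricb (b i) (b i)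
      = 2 * lam ^ 2 * ∑ i, gb (b i) (b i) + 2 * lam ^ 2 * ∑ i, ηb (b i) * ηb (b i) := by
        simp only [hEtaEinstein, Finset.sum_add_distrib, Finset.mul_sum]
    _ = 12 * lam ^ 2 := by
        simp only [horth, if_true, Finset.sum_const, Finset.card_univ, Fintype.card_fin,
          hηb_trace]
        norm_num
        ring

/-- A 5-dimensional almost nearly cosymplectic non-cosymplectic
manifold is η-Einstein: `R̄ic(X,Y) = 2λ²ḡ(X,Y) + 2λ²η̄(X)η̄(Y)`, and its scalar
curvature equals `12λ²`.  The underlying nearly cosymplectic structure satisfies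
`h² = -λ²(I - η⊗ξ)`, is Einstein with `Ric = 4λ²g`, `tr(h²) = -4λ²`, and the
Ricci tensors are related by the D-homothety Ricci formula; the scalar curvature
of `ḡ` is computed with a `ḡ`-orthonormal basis `b`. -/
theorem stmt_12 {V : Type*} [AddCommGroup V] [Module ℝ V] [FiniteDimensional ℝ V]
    (g : V →ₗ[ℝ] V →ₗ[ℝ] ℝ) (η : V →ₗ[ℝ] ℝ) (ξ : V)
    (h : V →ₗ[ℝ] V) (lam : ℝ) (hlam : lam ≠ 0)
    (Ric Ricb : V → V → ℝ) (trh2 : ℝ)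
    (gb : V → V → ℝ) (ηb : V → ℝ)
    (b : Module.Basis (Fin 5) ℝ V)
    (hηξ : η ξ = 1)
    (hη : ∀ X, η X = g X ξ)
    (hgsymm : ∀ X Y, g X Y = g Y X)
    (hh2 : ∀ X, h (h X) = -(lam ^ 2) • X + (lam ^ 2 * η X) • ξ)
    (htrh2 : trh2 = -(4 * lam ^ 2))
    (hEinstein : ∀ X Y, Ric X Y = 4 * lam ^ 2 * g X Y)
    (hgb : ∀ X Y, gb X Y = (3/2) * g X Y + (3/4) * (η X * η Y))
    (hηb : ∀ X, ηb X = (3/2) * η X)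
    (hRicrel : ∀ X Y, Ricb X Y = Ric X Y + g (h (h X)) Y
        - (5/4) * trh2 * (η X * η Y))
    (horth : ∀ i j, gb (b i) (b j) = if i = j then 1 else 0) :
    (∀ X Y, Ricb X Y = 2 * lam ^ 2 * gb X Y + 2 * lam ^ 2 * (ηb X * ηb Y)) ∧
    (∑ i, Ricb (b i) (b i) = 12 * lam ^ 2) :=
  stmt_12_general g η ξ h lam Ric Ricb trh2 gb ηb b hηξ hη hgsymm hh2 htrh2 hEinstein hgb hηb
    hRicrel horth
end

section
/- On a 5-dimensional almost nearly cosymplectic manifold, the curvature tensor satisfies R̄(Z, X)ξ̄ = λ²[η̄(X)Z - η̄(Z)X]. -/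
/-! The Sasaki–Einstein identity `R̃(Z,X)ξ̃ = η̃(X)Z - η̃(Z)X`, rescaled by `ξ̃ = λ⁻¹ξ`,
`η̃ = λη`, gives `R(Z,X)ξ = λ²[η(X)Z - η(Z)X]`. In the D-homothety formula for `R̄` at `Y = ξ`
every term containing `hξ` or `g(hZ, ξ)` vanishes, the `ξ`-component cancels, and the
`η(Y)`-terms contribute `(5λ²/4)[η(X)Z - η(Z)X]`. With `ξ̄ = (2/3)ξ` and `η̄ = (3/2)η` the total
coefficient is `(2/3)(1 + 5/4)λ² = (3/2)λ²`. -/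

section

variable {V : Type*} [AddCommGroup V] [Module ℝ V]

theorem curvature_apply_reeb_of_sasaki (η : V →ₗ[ℝ] ℝ) (ξ : V) {lam : ℝ} (hlam : lam ≠ 0)
    (R : V → V → V → V) (hRsmul : ∀ (c : ℝ) Z X Y, R Z X (c • Y) = c • R Z X Y)
    (hSasaki : ∀ Z X, R Z X (lam⁻¹ • ξ) = (lam * η X) • Z - (lam * η Z) • X) (Z X : V) :
    R Z X ξ = lam ^ 2 • (η X • Z - η Z • X) := by
  calc R Z X ξ = R Z X (lam • lam⁻¹ • ξ) := by rw [smul_smul, mul_inv_cancel₀ hlam, one_smul]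
    _ = lam ^ 2 • (η X • Z - η Z • X) := by rw [hRsmul, hSasaki]; module

theorem dHomothetic_curvature_apply_smul_reeb (g : V →ₗ[ℝ] V →ₗ[ℝ] ℝ) (η : V →ₗ[ℝ] ℝ)
    (ξ : V) (h : V →ₗ[ℝ] V) (lam : ℝ) (R Rb : V → V → V → V)
    (hηξ : η ξ = 1) (hη : ∀ X, η X = g X ξ) (hhξ : h ξ = 0) (hghξ : ∀ Z, g (h Z) ξ = 0)
    (hRsmul : ∀ (c : ℝ) Z X Y, R Z X (c • Y) = c • R Z X Y)
    (hcurv : ∀ Z X Y, Rb Z X Y = R Z X Y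
      + ((1/2) * g (h Z) Y) • h X - ((1/2) * g (h X) Y) • h Z
      + (g (h Z) X) • h Y
      - ((5 * lam ^ 2 / 4) * (η Y * η Z)) • X
      + ((5 * lam ^ 2 / 4) * (η Y * η X)) • Z
      - ((lam ^ 2 / 2) * (η X * g Z Y - η Z * g X Y)) • ξ)
    (c : ℝ) (Z X : V) :
    Rb Z X (c • ξ) = c • R Z X ξ + (c * (5 * lam ^ 2 / 4)) • (η X • Z - η Z • X) := by
  rw [hcurv, hRsmul]
  simp only [map_smul, hghξ, hhξ, hηξ, smul_eq_mul, mul_zero, zero_smul, smul_zero, ← hη]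
  module

end

theorem stmt_13_general {V : Type*} [AddCommGroup V] [Module ℝ V]
    (g : V →ₗ[ℝ] V →ₗ[ℝ] ℝ) (η : V →ₗ[ℝ] ℝ) (ξ : V)
    (h : V →ₗ[ℝ] V) (lam : ℝ) (hlam : lam ≠ 0)
    (R Rb : V → V → V → V)
    (hηξ : η ξ = 1)
    (hη : ∀ X, η X = g X ξ)
    (hhξ : h ξ = 0)
    (hghξ : ∀ Z, g (h Z) ξ = 0)
    (hRsmul : ∀ (c : ℝ) Z X Y, R Z X (c • Y) = c • R Z X Y)
    (hSasaki : ∀ Z X, R Z X (lam⁻¹ • ξ) = (lam * η X) • Z - (lam * η Z) • X)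
    (hcurv : ∀ Z X Y, Rb Z X Y = R Z X Y
      + ((1/2) * g (h Z) Y) • h X - ((1/2) * g (h X) Y) • h Z
      + (g (h Z) X) • h Y
      - ((5 * lam ^ 2 / 4) * (η Y * η Z)) • X
      + ((5 * lam ^ 2 / 4) * (η Y * η X)) • Z
      - ((lam ^ 2 / 2) * (η X * g Z Y - η Z * g X Y)) • ξ) :
    ∀ Z X, Rb Z X ((2/3 : ℝ) • ξ) =
      (lam ^ 2 * ((3/2) * η X)) • Z - (lam ^ 2 * ((3/2) * η Z)) • X := by
  intro Z X
  rw [dHomothetic_curvature_apply_smul_reeb g η ξ h lam R Rb hηξ hη hhξ hghξ hRsmul hcurv,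
    curvature_apply_reeb_of_sasaki η ξ hlam R hRsmul hSasaki]
  module

/-- On a 5-dimensional almost nearly cosymplectic manifold, the
curvature satisfies `R̄(Z,X)ξ̄ = λ²[η̄(X)Z - η̄(Z)X]`.  The barred curvature is
related to the curvature `R` of the underlying nearly cosymplectic metric by the
formula (curv5) of the paper; `R` agrees with the Sasaki-Einstein curvature,
giving `R(Z,X)ξ̃ = η̃(X)Z - η̃(Z)X` with `ξ̃ = λ⁻¹ξ`, `η̃ = λη`; and
`ξ̄ = (2/3)ξ`, `η̄ = (3/2)η`, `h² = -λ²(I - η⊗ξ)`. -/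
theorem stmt_13 {V : Type*} [AddCommGroup V] [Module ℝ V] [FiniteDimensional ℝ V]
    (hdim : Module.finrank ℝ V = 5)
    (g : V →ₗ[ℝ] V →ₗ[ℝ] ℝ) (η : V →ₗ[ℝ] ℝ) (ξ : V)
    (h : V →ₗ[ℝ] V) (lam : ℝ) (hlam : lam ≠ 0)
    (R Rb : V → V → V → V)
    (hηξ : η ξ = 1)
    (hη : ∀ X, η X = g X ξ)
    (hgsymm : ∀ X Y, g X Y = g Y X)
    (hhξ : h ξ = 0)
    (hηh : ∀ X, η (h X) = 0)
    (hghξ : ∀ Z, g (h Z) ξ = 0)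
    (hh2 : ∀ X, h (h X) = -(lam ^ 2) • X + (lam ^ 2 * η X) • ξ)
    (hRsmul : ∀ (c : ℝ) Z X Y, R Z X (c • Y) = c • R Z X Y)
    (hSasaki : ∀ Z X, R Z X (lam⁻¹ • ξ) = (lam * η X) • Z - (lam * η Z) • X)
    (hcurv : ∀ Z X Y, Rb Z X Y = R Z X Y
      + ((1/2) * g (h Z) Y) • h X - ((1/2) * g (h X) Y) • h Z
      + (g (h Z) X) • h Y
      - ((5 * lam ^ 2 / 4) * (η Y * η Z)) • X
      + ((5 * lam ^ 2 / 4) * (η Y * η X)) • Z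
      - ((lam ^ 2 / 2) * (η X * g Z Y - η Z * g X Y)) • ξ) :
    ∀ Z X, Rb Z X ((2/3 : ℝ) • ξ) =
      (lam ^ 2 * ((3/2) * η X)) • Z - (lam ^ 2 * ((3/2) * η Z)) • X :=
  stmt_13_general g η ξ h lam hlam R Rb hηξ hη hhξ hghξ hRsmul hSasaki hcurv
end
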